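/- arXiv:2411.19879 — 3 statements merged into one kernel-verified Lean document; each statement's English description precedes it below -/
import Mathlib

section
/- Let G be a simple mixed graph on n vertices with integrated adjacency matrix 𝓘(G). Then (1/2)(δ₁(G)+δ₂(G)) ≤ λ₁(𝓘(G)) ≤ max{Δ₁(G), Δ₂(G)}, where δᵢ, Δᵢ are the minimum and maximum of d(u)+d⁺(u) (i=1) and d(u)+d⁻(u) (i=2) over vertices u, and λ₁ denotes the largest eigenvalue. -/
/-!
The row sums of `M = [[A, B], [Bᵀ, A]]` are `d(u) + d⁺(u)` on the first block of rows and
`d(u) + d⁻(u)` on the second, and `λ₁ = μ 0` is the largest point of the spectrum of `M`.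
Lower bound: `λ₁ • 1 - M` is positive semidefinite, so `𝟏ᵀ M 𝟏 ≤ 2n λ₁`, while `𝟏ᵀ M 𝟏` is the
sum of all row sums, hence at least `n (δ₁ + δ₂)`. Upper bound: by Gershgorin's theorem an
eigenvalue of a matrix with nonnegative entries is at most one of its row sums.
-/

open Matrix Polynomial

namespace Matrix

variable {m : Type*} [Fintype m] [DecidableEq m]

theorem spectrum_eq_range_of_charpoly_eq_prod {M : Matrix m m ℝ} {ι : Type*} [Fintype ι]
    {μ : ι → ℝ} (hμ : M.charpoly = ∏ i, (X - C (μ i))) : spectrum ℝ M = Set.range μ := by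
  ext t
  simp only [mem_spectrum_iff_isRoot_charpoly, hμ, isRoot_prod, Finset.mem_univ, true_and,
    root_X_sub_C, Set.mem_range, eq_comm]

theorem IsHermitian.dotProduct_mulVec_le {M : Matrix m m ℝ} (hM : M.IsHermitian) {c : ℝ}
    (hc : ∀ t ∈ spectrum ℝ M, t ≤ c) (x : m → ℝ) : x ⬝ᵥ (M *ᵥ x) ≤ c * (x ⬝ᵥ x) := by
  have hpsd : (algebraMap ℝ _ c - M).PosSemidef := by
    refine posSemidef_iff_isHermitian_and_spectrum_nonneg.mpr ⟨?_, ?_⟩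
    · exact (isHermitian_diagonal_of_self_adjoint _ (IsSelfAdjoint.all _)).sub hM
    · rw [← spectrum.singleton_sub_eq]
      rintro _ ⟨_, rfl, t, ht, rfl⟩
      exact sub_nonneg.mpr (hc t ht)
  simpa [sub_mulVec, Algebra.algebraMap_eq_smul_one, smul_mulVec, dotProduct_sub] using
    hpsd.dotProduct_mulVec_nonneg x

theorem IsHermitian.sum_sum_le_mul_card {M : Matrix m m ℝ} (hM : M.IsHermitian) {c : ℝ}
    (hc : ∀ t ∈ spectrum ℝ M, t ≤ c) : ∑ i, ∑ j, M i j ≤ c * Fintype.card m := by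
  simpa [dotProduct, mulVec, Finset.sum_comm] using hM.dotProduct_mulVec_le hc 1

theorem exists_le_sum_row_of_mem_spectrum {M : Matrix m m ℝ} (hM : ∀ i j, 0 ≤ M i j) {μ : ℝ}
    (hμ : μ ∈ spectrum ℝ M) : ∃ k, μ ≤ ∑ j, M k j := by
  rw [← spectrum_toLin', ← Module.End.hasEigenvalue_iff_mem_spectrum] at hμ
  obtain ⟨k, hk⟩ := eigenvalue_mem_ball hμ
  refine ⟨k, ?_⟩
  rw [Metric.mem_closedBall, Real.dist_eq, ← Finset.add_sum_erase _ _ (Finset.mem_univ k)] at *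
  simp only [Real.norm_of_nonneg (hM k _)] at hk
  linarith [le_of_abs_le hk]

section IntegratedAdjacency

variable {n : Type*} [Fintype n] (A B : Matrix n n ℝ) (u : n)

theorem sum_fromBlocks_transpose_inl :
    ∑ j, fromBlocks A B Bᵀ A (.inl u) j = ∑ j, A u j + ∑ j, B u j := by
  simp [Fintype.sum_sum_type]

theorem sum_fromBlocks_transpose_inr :
    ∑ j, fromBlocks A B Bᵀ A (.inr u) j = ∑ j, A u j + ∑ j, B j u := by
  simp [Fintype.sum_sum_type, add_comm]

end IntegratedAdjacency

end Matrix

/-- For a simple mixed graph `G` on `n ≥ 1` vertices with integrated adjacency matrix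
`[[A, B], [Bᵀ, A]]` and largest eigenvalue `λ₁`, one has
`(δ₁(G) + δ₂(G)) / 2 ≤ λ₁ ≤ max{Δ₁(G), Δ₂(G)}`, where `δᵢ, Δᵢ` are the minimum and
maximum over vertices `u` of `d(u) + d⁺(u)` (`i = 1`) and `d(u) + d⁻(u)` (`i = 2`). -/
theorem stmt14 {n : ℕ} (hn : 0 < n) (A B : Matrix (Fin n) (Fin n) ℝ)
    (hA : A.IsSymm)
    (hA01 : ∀ i j, A i j = 0 ∨ A i j = 1)
    (hB01 : ∀ i j, B i j = 0 ∨ B i j = 1)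
    (δ₁ δ₂ Δ₁ Δ₂ : ℝ)
    (hδ₁ : IsLeast (Set.range fun u : Fin n => (∑ j, A u j) + ∑ j, B u j) δ₁)
    (hδ₂ : IsLeast (Set.range fun u : Fin n => (∑ j, A u j) + ∑ j, B j u) δ₂)
    (hΔ₁ : IsGreatest (Set.range fun u : Fin n => (∑ j, A u j) + ∑ j, B u j) Δ₁)
    (hΔ₂ : IsGreatest (Set.range fun u : Fin n => (∑ j, A u j) + ∑ j, B j u) Δ₂)
    (μ : Fin (2 * n) → ℝ) (hμa : Antitone μ)
    (hμ : (Matrix.fromBlocks A B Bᵀ A).charpoly = ∏ i, (X - C (μ i))) :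
    (δ₁ + δ₂) / 2 ≤ μ ⟨0, by omega⟩ ∧ μ ⟨0, by omega⟩ ≤ max Δ₁ Δ₂ := by
  set M := fromBlocks A B Bᵀ A
  set i₀ : Fin (2 * n) := ⟨0, by omega⟩
  have hspec := spectrum_eq_range_of_charpoly_eq_prod hμ
  have hle : ∀ t ∈ spectrum ℝ M, t ≤ μ i₀ := by
    rw [hspec]
    rintro _ ⟨i, rfl⟩
    exact hμa (Fin.mk_le_mk.mpr i.val.zero_le)
  constructor
  · have hsum := (isHermitian_iff_isSymm.mpr (hA.fromBlocks rfl hA)).sum_sum_le_mul_card hle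
    rw [Fintype.sum_sum_type] at hsum
    simp only [sum_fromBlocks_transpose_inl, sum_fromBlocks_transpose_inr, Fintype.card_sum,
      Fintype.card_fin, Nat.cast_add] at hsum
    have h₁ := Finset.card_nsmul_le_sum Finset.univ _ _ fun u _ => hδ₁.2 ⟨u, rfl⟩
    have h₂ := Finset.card_nsmul_le_sum Finset.univ _ _ fun u _ => hδ₂.2 ⟨u, rfl⟩
    simp only [Finset.card_univ, Fintype.card_fin, nsmul_eq_mul] at h₁ h₂
    have key : (n : ℝ) * ((δ₁ + δ₂) / 2) ≤ n * μ i₀ := by linarith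
    exact le_of_mul_le_mul_left key (by exact_mod_cast hn)
  · have hnonneg : ∀ i j, 0 ≤ M i j := by
      have hA0 : ∀ i j, 0 ≤ A i j := fun i j => by rcases hA01 i j with h | h <;> simp [h]
      have hB0 : ∀ i j, 0 ≤ B i j := fun i j => by rcases hB01 i j with h | h <;> simp [h]
      rintro (i | i) (j | j) <;> simp [M, hA0, hB0]
    obtain ⟨k | k, hk⟩ :=
      exists_le_sum_row_of_mem_spectrum hnonneg (hspec ▸ Set.mem_range_self i₀)
    · rw [sum_fromBlocks_transpose_inl] at hk
      exact le_max_of_le_left (hk.trans (hΔ₁.2 ⟨k, rfl⟩))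
    · rw [sum_fromBlocks_transpose_inr] at hk
      exact le_max_of_le_right (hk.trans (hΔ₂.2 ⟨k, rfl⟩))
end

section
/- Let G be a simple mixed graph on n vertices and let n⁺ and n⁻ be the numbers of positive and negative eigenvalues (with multiplicity) of the integrated adjacency matrix 𝓘(G). Then the independence number of G satisfies α(G) ≤ min{(2n−n⁺)/2, (2n−n⁻)/2}. -/
/-!
Diagonalising `M = 𝓘(G)` by its orthonormal eigenbasis shows that the quadratic form
`x ↦ xᵀ M x` is equivalent to `∑ λᵢ yᵢ²`, so its positive and negative indices of inertia are
`n⁺` and `n⁻`. If `S` is independent, the form vanishes on the `2|S|`-dimensional coordinate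
subspace indexed by the two copies of `S`; such a subspace meets every positive (or negative)
definite subspace trivially, whence `n⁺ + 2|S| ≤ 2n` and `n⁻ + 2|S| ≤ 2n`.
-/

open Matrix QuadraticMap

section Inertia

variable {ι : Type*} [Fintype ι] [DecidableEq ι]

theorem Matrix.IsHermitian.toQuadraticForm'_equivalent_weightedSumSquares
    {M : Matrix ι ι ℝ} (hM : M.IsHermitian) :
    M.toQuadraticForm'.Equivalent (weightedSumSquares ℝ hM.eigenvalues) := by
  set U : Matrix ι ι ℝ := (hM.eigenvectorUnitary : Matrix ι ι ℝ)
  refine ⟨{ UnitaryGroup.toLinearEquiv (star hM.eigenvectorUnitary) with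
      map_app' := fun x => ?_ }⟩
  have hspec : M = U * diagonal hM.eigenvalues * Uᵀ := by
    simpa [star_eq_conjTranspose] using hM.spectral_theorem
  change weightedSumSquares ℝ hM.eigenvalues (star U *ᵥ x) = _
  rw [toQuadraticForm', LinearMap.BilinMap.toQuadraticMap_apply, toLinearMap₂'_apply']
  conv_rhs => rw [hspec, ← mulVec_mulVec, ← mulVec_mulVec, dotProduct_mulVec, ← mulVec_transpose]
  simp [weightedSumSquares_apply, dotProduct, mulVec_diagonal, star_eq_conjTranspose,
    mul_left_comm]

theorem Matrix.IsHermitian.sigPos_toQuadraticForm' {M : Matrix ι ι ℝ} (hM : M.IsHermitian) :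
    sigPos M.toQuadraticForm' = Nat.card {i // 0 < hM.eigenvalues i} := by
  rw [QuadraticForm.sigPos_of_equiv_weightedSumSquares
    hM.toQuadraticForm'_equivalent_weightedSumSquares, ← Nat.card_coe_set_eq]
  rfl

theorem Matrix.IsHermitian.sigNeg_toQuadraticForm' {M : Matrix ι ι ℝ} (hM : M.IsHermitian) :
    sigNeg M.toQuadraticForm' = Nat.card {i // hM.eigenvalues i < 0} := by
  rw [QuadraticForm.sigNeg_of_equiv_weightedSumSquares
    hM.toQuadraticForm'_equivalent_weightedSumSquares, ← Nat.card_coe_set_eq]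
  rfl

theorem Matrix.toQuadraticForm'_eq_zero_of_mem_spanSubset {R : Type*} [CommRing R]
    {M : Matrix ι ι R} {T : Set ι} (hT : ∀ a ∈ T, ∀ b ∈ T, M a b = 0) {x : ι → R}
    (hx : x ∈ Pi.spanSubset R T) :
    M.toQuadraticForm' x = 0 := by
  rw [Pi.mem_spanSubset_iff] at hx
  rw [toQuadraticForm', LinearMap.BilinMap.toQuadraticMap_apply, toLinearMap₂'_apply]
  refine Finset.sum_eq_zero fun a _ => Finset.sum_eq_zero fun b _ => ?_
  by_cases ha : a ∈ T
  · by_cases hb : b ∈ T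
    · simp [hT a ha b hb]
    · simp [hx b hb]
  · simp [hx a ha]

theorem QuadraticForm.sigNeg_add_finrank_le_of_nonneg {𝕜 V : Type*} [Field 𝕜] [LinearOrder 𝕜]
    [IsOrderedRing 𝕜] [AddCommGroup V] [Module 𝕜 V] [FiniteDimensional 𝕜 V]
    {Q : QuadraticForm 𝕜 V} {W : Subspace 𝕜 V} (hW : ∀ x ∈ W, 0 ≤ Q x) :
    sigNeg Q + Module.finrank 𝕜 W ≤ Module.finrank 𝕜 V := by
  simpa using sigPos_add_finrank_le_of_nonpos (Q := -Q) fun x hx => neg_nonpos.2 (hW x hx)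

theorem Matrix.IsHermitian.card_pos_eigenvalues_add_card_le {M : Matrix ι ι ℝ}
    (hM : M.IsHermitian) {T : Finset ι} (hT : ∀ a ∈ T, ∀ b ∈ T, M a b = 0) :
    Nat.card {i // 0 < hM.eigenvalues i} + T.card ≤ Fintype.card ι := by
  rw [← hM.sigPos_toQuadraticForm', ← Set.ncard_coe_finset, ← Pi.dim_spanSubset (R := ℝ),
    ← Module.finrank_fintype_fun_eq_card ℝ]
  exact QuadraticForm.sigPos_add_finrank_le_of_nonpos fun x hx =>
    (toQuadraticForm'_eq_zero_of_mem_spanSubset hT hx).le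

theorem Matrix.IsHermitian.card_neg_eigenvalues_add_card_le {M : Matrix ι ι ℝ}
    (hM : M.IsHermitian) {T : Finset ι} (hT : ∀ a ∈ T, ∀ b ∈ T, M a b = 0) :
    Nat.card {i // hM.eigenvalues i < 0} + T.card ≤ Fintype.card ι := by
  rw [← hM.sigNeg_toQuadraticForm', ← Set.ncard_coe_finset, ← Pi.dim_spanSubset (R := ℝ),
    ← Module.finrank_fintype_fun_eq_card ℝ]
  exact QuadraticForm.sigNeg_add_finrank_le_of_nonneg fun x hx =>
    (toQuadraticForm'_eq_zero_of_mem_spanSubset hT hx).ge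

end Inertia

theorem Matrix.fromBlocks_apply_eq_zero_of_mem_disjSum {ι R : Type*} [Zero R]
    {A B : Matrix ι ι R} {S : Finset ι} (hS : ∀ i ∈ S, ∀ j ∈ S, A i j = 0 ∧ B i j = 0) :
    ∀ a ∈ S.disjSum S, ∀ b ∈ S.disjSum S, fromBlocks A B Bᵀ A a b = 0 := by
  rintro (i | i) hi (j | j) hj <;>
    simp only [Finset.inl_mem_disjSum, Finset.inr_mem_disjSum] at hi hj
  · exact (hS i hi j hj).1
  · exact (hS i hi j hj).2
  · exact (hS j hj i hi).2
  · exact (hS i hi j hj).1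

theorem stmt18_general {n : ℕ} (A B : Matrix (Fin n) (Fin n) ℝ)
    (hM : (Matrix.fromBlocks A B Bᵀ A).IsHermitian)
    (S : Finset (Fin n))
    (hS : ∀ i ∈ S, ∀ j ∈ S, A i j = 0 ∧ B i j = 0) :
    (S.card : ℝ) ≤
      min ((2 * (n : ℝ) - Nat.card {i : Fin n ⊕ Fin n // 0 < hM.eigenvalues i}) / 2)
        ((2 * (n : ℝ) - Nat.card {i : Fin n ⊕ Fin n // hM.eigenvalues i < 0}) / 2) := by
  have hT := fromBlocks_apply_eq_zero_of_mem_disjSum hS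
  have hpos := hM.card_pos_eigenvalues_add_card_le hT
  have hneg := hM.card_neg_eigenvalues_add_card_le hT
  simp only [Finset.card_disjSum, Fintype.card_sum, Fintype.card_fin] at hpos hneg
  rify at hpos hneg
  exact le_min (by linarith) (by linarith)

/-- For a simple mixed graph `G` on `n` vertices, let `n⁺` and `n⁻` be the numbers of
positive and negative eigenvalues (with multiplicity) of `𝓘(G) = [[A, B], [Bᵀ, A]]`.
Then every independent set `S` of `G` (no two vertices joined by an edge or an arc)
satisfies `|S| ≤ min{(2n − n⁺)/2, (2n − n⁻)/2}`; hence this bounds the independence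
number `α(G)`. -/
theorem stmt18 {n : ℕ} (A B : Matrix (Fin n) (Fin n) ℝ)
    (hA : A.IsSymm) (hAdiag : ∀ i, A i i = 0) (hBdiag : ∀ i, B i i = 0)
    (hA01 : ∀ i j, A i j = 0 ∨ A i j = 1)
    (hB01 : ∀ i j, B i j = 0 ∨ B i j = 1)
    (hM : (Matrix.fromBlocks A B Bᵀ A).IsHermitian)
    (S : Finset (Fin n))
    (hS : ∀ i ∈ S, ∀ j ∈ S, A i j = 0 ∧ B i j = 0) :
    (S.card : ℝ) ≤
      min ((2 * (n : ℝ) - Nat.card {i : Fin n ⊕ Fin n // 0 < hM.eigenvalues i}) / 2)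
        ((2 * (n : ℝ) - Nat.card {i : Fin n ⊕ Fin n // hM.eigenvalues i < 0}) / 2) :=
  stmt18_general A B hM S hS
end

section
/- Let G be a simple mixed graph whose integrated adjacency matrix 𝓘(G) has eigenvalues in nonincreasing order, and suppose G contains a clique on k ≥ 1 vertices (a set of k vertices pairwise joined by an edge and arcs in both directions). Then k ≤ 1 + λ₁(𝓘(G))/2. -/
/-!
The clique `S` gives the test vector `x = (𝟙_S, 𝟙_S)` with `xᵀ 𝓘(G) x = 4k(k - 1)` and
`xᵀ x = 2k`. Since every eigenvalue of the symmetric matrix `𝓘(G)` is at most `λ₁`, the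
Rayleigh quotient bound `xᵀ 𝓘(G) x ≤ λ₁ xᵀ x` gives `2(k - 1) ≤ λ₁`.
-/

open Matrix Polynomial Finset

theorem Matrix.exists_eq_of_mem_spectrum_of_charpoly_eq_prod {n ι K : Type*} [Fintype n]
    [DecidableEq n] [Fintype ι] [Field K] {A : Matrix n n K} {μ : ι → K}
    (h : A.charpoly = ∏ i, (X - C (μ i))) {t : K} (ht : t ∈ spectrum K A) : ∃ i, μ i = t := by
  rw [mem_spectrum_iff_isRoot_charpoly, h, IsRoot, eval_prod, prod_eq_zero_iff] at ht
  obtain ⟨i, -, hi⟩ := ht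
  exact ⟨i, by simpa [sub_eq_zero, eq_comm] using hi⟩

section QuadraticForms

variable {m R : Type*} [Fintype m]

open scoped MatrixOrder in
theorem Matrix.IsHermitian.dotProduct_mulVec_le_s19 [DecidableEq m] {M : Matrix m m ℝ}
    (hM : M.IsHermitian) {c : ℝ} (hc : ∀ t ∈ spectrum ℝ M, t ≤ c) (x : m → ℝ) :
    x ⬝ᵥ M *ᵥ x ≤ c * (x ⬝ᵥ x) := by
  have hpsd : (algebraMap ℝ _ c - M).PosSemidef :=
    (le_algebraMap_iff_spectrum_le hM.isSelfAdjoint).2 hc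
  simpa [Algebra.algebraMap_eq_smul_one, sub_mulVec, smul_mulVec, dotProduct_sub,
    dotProduct_smul] using hpsd.dotProduct_mulVec_nonneg x

theorem Matrix.sumElim_dotProduct_fromBlocks_mulVec_sumElim [CommRing R]
    (A B : Matrix m m R) (u : m → R) :
    Sum.elim u u ⬝ᵥ fromBlocks A B Bᵀ A *ᵥ Sum.elim u u =
      2 * (u ⬝ᵥ A *ᵥ u) + 2 * (u ⬝ᵥ B *ᵥ u) := by
  rw [fromBlocks_mulVec, sumElim_dotProduct_sumElim, Sum.elim_comp_inl, Sum.elim_comp_inr,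
    dotProduct_add, dotProduct_add, dotProduct_mulVec u Bᵀ, vecMul_transpose,
    dotProduct_comm (B *ᵥ u)]
  ring

variable [DecidableEq m] [Ring R] (S : Finset m)

theorem Finset.indicator_dotProduct_mulVec_indicator (M : Matrix m m R) :
    (fun i ↦ if i ∈ S then (1 : R) else 0) ⬝ᵥ M *ᵥ (fun i ↦ if i ∈ S then 1 else 0) =
      ∑ i ∈ S, ∑ j ∈ S, M i j := by
  simp [dotProduct, mulVec, sum_ite_mem]

theorem Finset.indicator_dotProduct_indicator :
    (fun i ↦ if i ∈ S then (1 : R) else 0) ⬝ᵥ (fun i ↦ if i ∈ S then 1 else 0) = #S := by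
  simp [dotProduct, sum_ite_mem]

end QuadraticForms

theorem Finset.sum_sum_apply_eq_card_mul_card_sub_one {m R : Type*} [DecidableEq m] [Ring R]
    {S : Finset m} {M : Matrix m m R} (hdiag : ∀ i ∈ S, M i i = 0)
    (hone : ∀ i ∈ S, ∀ j ∈ S, i ≠ j → M i j = 1) :
    ∑ i ∈ S, ∑ j ∈ S, M i j = #S * (#S - 1) := by
  have hrow : ∀ i ∈ S, ∑ j ∈ S, M i j = #S - 1 := fun i hi ↦ by
    rw [← sum_erase_add S _ hi, hdiag i hi, add_zero, ← cast_card_erase_of_mem hi,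
      sum_congr rfl fun j hj ↦ hone i hi j (mem_of_mem_erase hj) (ne_of_mem_erase hj).symm]
    simp
  rw [sum_congr rfl hrow, sum_const, nsmul_eq_mul]

/-- For a simple mixed graph `G` on `n ≥ 1` vertices containing a clique on `k ≥ 1`
vertices (pairwise joined by an edge and by arcs in both directions), the largest
eigenvalue `λ₁` of `𝓘(G) = [[A, B], [Bᵀ, A]]` satisfies `k ≤ 1 + λ₁/2`. -/
theorem stmt19 {n k : ℕ} (hn : 0 < n) (hk : 1 ≤ k)
    (A B : Matrix (Fin n) (Fin n) ℝ)
    (hA : A.IsSymm) (hAdiag : ∀ i, A i i = 0) (hBdiag : ∀ i, B i i = 0)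
    (S : Finset (Fin n)) (hcard : S.card = k)
    (hclique : ∀ i ∈ S, ∀ j ∈ S, i ≠ j → A i j = 1 ∧ B i j = 1)
    (μ : Fin (2 * n) → ℝ) (hμa : Antitone μ)
    (hμ : (Matrix.fromBlocks A B Bᵀ A).charpoly = ∏ i, (X - C (μ i))) :
    (k : ℝ) ≤ 1 + μ ⟨0, by omega⟩ / 2 := by
  have hherm : (fromBlocks A B Bᵀ A).IsHermitian := by
    rw [IsHermitian, conjTranspose_eq_transpose_of_trivial, fromBlocks_transpose, hA.eq,
      transpose_transpose]
  have hspec : ∀ t ∈ spectrum ℝ (fromBlocks A B Bᵀ A), t ≤ μ ⟨0, by omega⟩ := fun t ht ↦ by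
    obtain ⟨i, rfl⟩ := exists_eq_of_mem_spectrum_of_charpoly_eq_prod hμ ht
    exact hμa (Nat.zero_le _)
  set u : Fin n → ℝ := fun i ↦ if i ∈ S then 1 else 0
  have hAu : u ⬝ᵥ A *ᵥ u = k * (k - 1) := by
    rw [indicator_dotProduct_mulVec_indicator, sum_sum_apply_eq_card_mul_card_sub_one
      (fun i _ ↦ hAdiag i) fun i hi j hj hij ↦ (hclique i hi j hj hij).1, hcard]
  have hBu : u ⬝ᵥ B *ᵥ u = k * (k - 1) := by
    rw [indicator_dotProduct_mulVec_indicator, sum_sum_apply_eq_card_mul_card_sub_one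
      (fun i _ ↦ hBdiag i) fun i hi j hj hij ↦ (hclique i hi j hj hij).2, hcard]
  have hray := hherm.dotProduct_mulVec_le_s19 hspec (Sum.elim u u)
  rw [sumElim_dotProduct_fromBlocks_mulVec_sumElim, sumElim_dotProduct_sumElim,
    indicator_dotProduct_indicator, hAu, hBu, hcard] at hray
  have hkpos : (0 : ℝ) < k := by exact_mod_cast hk
  nlinarith
end
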